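/- A simplicial toric monoid σ with extremals v₁,…,v_n admits a canonical smooth refinement: the collection of all monoids ℤ≥0⟨v_i : i ∈ I⟩ for subsets I ⊆ {1,…,n} is a smooth refinement of σ (the 'smoothing' of σ). -/

import Mathlib

open scoped NNReal

namespace Toric

/-- The lattice `ℤ^n`. -/
abbrev L (n : ℕ) := Fin n → ℤ

/-- Inclusion of the lattice into the real vector space. -/
def toReal {n : ℕ} (v : L n) : Fin n → ℝ := fun i => (v i : ℝ)

lemma toReal_zero {n : ℕ} : toReal (0 : L n) = 0 := by
  funext i; simp [toReal]

lemma toReal_add {n : ℕ} (v w : L n) : toReal (v + w) = toReal v + toReal w := by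
  funext i; simp [toReal]

/-- The support of a monoid of lattice points: its non-negative real span,
viewed as a convex cone (an `ℝ≥0`-submodule). -/
noncomputable def supp {n : ℕ} (σ : AddSubmonoid (L n)) : Submodule ℝ≥0 (Fin n → ℝ) :=
  Submodule.span ℝ≥0 (toReal '' (σ : Set (L n)))

/-- A toric monoid: a finitely generated, sharp, saturated submonoid of the
lattice `ℤ^n` (integrality and torsion-freeness are automatic for submonoids
of a lattice). -/
structure IsToric {n : ℕ} (σ : AddSubmonoid (L n)) : Prop where
  fg : σ.FG
  sharp : ∀ v ∈ σ, -v ∈ σ → v = 0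
  saturated : ∀ v ∈ AddSubgroup.closure (σ : Set (L n)), ∀ k : ℕ, 0 < k → k • v ∈ σ → v ∈ σ

/-- `τ` is a face of `σ`: a submonoid such that `v + w ∈ τ` with `v, w ∈ σ`
implies `v, w ∈ τ`. -/
def IsFace {n : ℕ} (τ σ : AddSubmonoid (L n)) : Prop :=
  τ ≤ σ ∧ ∀ v w : L n, v ∈ σ → w ∈ σ → v + w ∈ τ → v ∈ τ ∧ w ∈ τ

/-- A refinement of the monoid `σ`: a collection of submonoids of `σ`, closed
under passing to faces, such that the intersection of any two members is a
face of both, and whose supports cover the support of `σ`. -/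
def IsRefinement {n : ℕ} (R : Set (AddSubmonoid (L n))) (σ : AddSubmonoid (L n)) : Prop :=
  (∀ σ' ∈ R, σ' ≤ σ) ∧
  (∀ σ' ∈ R, ∀ τ, IsFace τ σ' → τ ∈ R) ∧
  (∀ σ₁ ∈ R, ∀ σ₂ ∈ R, IsFace (σ₁ ⊓ σ₂) σ₁ ∧ IsFace (σ₁ ⊓ σ₂) σ₂) ∧
  (⋃ σ' ∈ R, (supp σ' : Set (Fin n → ℝ))) = (supp σ : Set (Fin n → ℝ))

/-- A smooth (toric) monoid: freely generated by finitely many linearly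
independent lattice vectors. -/
def IsSmooth {n : ℕ} (σ : AddSubmonoid (L n)) : Prop :=
  ∃ (k : ℕ) (b : Fin k → L n), LinearIndependent ℤ b ∧
    σ = AddSubmonoid.closure (Set.range b)

end Toric

/-! Since the `b i` are linearly independent, `l ↦ ∑ l i • b i` embeds `ι →₀ ℕ` into the
lattice, mapping the vectors supported on `I` onto `ℤ≥0⟨b i : i ∈ I⟩`. So intersections of
these monoids correspond to intersections of index sets, and faces to subsets: `c + d` supported
on `J` forces `c` and `d` to be, and a face containing `∑ c i • b i` contains each `b i` with
`c i ≠ 0`. -/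

open Finsupp Set

theorem LinearIndependent.span_image_inter {R M ι : Type*} [Semiring R] [AddCommMonoid M]
    [Module R M] {v : ι → M} (hv : LinearIndependent R v) (s t : Set ι) :
    Submodule.span R (v '' (s ∩ t)) = Submodule.span R (v '' s) ⊓ Submodule.span R (v '' t) := by
  simp only [span_image_eq_map_linearCombination, supported_inter,
    Submodule.map_inf _ hv.finsuppLinearCombination_injective]

namespace AddSubmonoid

variable {M ι : Type*} [AddCommMonoid M] {v : ι → M}

theorem mem_closure_image_iff_linearCombination {s : Set ι} {x : M} :
    x ∈ closure (v '' s) ↔ ∃ l ∈ supported ℕ ℕ s, linearCombination ℕ v l = x := by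
  rw [← Submodule.span_nat_eq_addSubmonoidClosure, Submodule.mem_toAddSubmonoid,
    mem_span_image_iff_linearCombination]

theorem closure_image_inter (hv : LinearIndependent ℕ v) (s t : Set ι) :
    closure (v '' (s ∩ t)) = closure (v '' s) ⊓ closure (v '' t) := by
  simp only [← Submodule.span_nat_eq_addSubmonoidClosure, hv.span_image_inter]
  rfl

end AddSubmonoid

namespace Toric

open AddSubmonoid (mem_closure_image_iff_linearCombination closure_image_inter)

variable {n : ℕ}

theorem supp_mono {τ σ : AddSubmonoid (L n)} (h : τ ≤ σ) : supp τ ≤ supp σ :=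
  Submodule.span_mono (image_mono h)

theorem IsFace.mem_of_sum_mem {α : Type*} {τ σ : AddSubmonoid (L n)} (h : IsFace τ σ)
    {s : Finset α} {f : α → L n} (hf : ∀ i ∈ s, f i ∈ σ) (hs : ∑ i ∈ s, f i ∈ τ) :
    ∀ i ∈ s, f i ∈ τ := by
  induction s using Finset.cons_induction with
  | empty => simp
  | cons a s _ ih =>
    rw [Finset.sum_cons] at hs
    simp only [Finset.mem_cons, forall_eq_or_imp] at hf ⊢
    obtain ⟨hfa, hrest⟩ := h.2 _ _ hf.1 (sum_mem hf.2) hs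
    exact ⟨hfa, ih hf.2 hrest⟩

theorem IsFace.mem_of_nsmul_mem {τ σ : AddSubmonoid (L n)} (h : IsFace τ σ) {m : ℕ}
    (hm : m ≠ 0) {x : L n} (hx : x ∈ σ) (hmx : m • x ∈ τ) : x ∈ τ := by
  obtain ⟨m, rfl⟩ := Nat.exists_eq_succ_of_ne_zero hm
  rw [succ_nsmul'] at hmx
  exact (h.2 _ _ hx (nsmul_mem hx m) hmx).1

variable {ι : Type*} {b : ι → L n}

theorem isFace_closure_image_of_subset (hb : LinearIndependent ℕ b) {I J : Set ι}
    (hJI : J ⊆ I) : IsFace (AddSubmonoid.closure (b '' J)) (AddSubmonoid.closure (b '' I)) := by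
  refine ⟨AddSubmonoid.closure_mono (image_mono hJI), fun v w hv hw hvw => ?_⟩
  simp only [mem_closure_image_iff_linearCombination] at hv hw hvw ⊢
  obtain ⟨c, -, rfl⟩ := hv
  obtain ⟨d, -, rfl⟩ := hw
  obtain ⟨e, he, hsum⟩ := hvw
  rw [← map_add, hb.finsuppLinearCombination_injective.eq_iff] at hsum
  subst hsum
  have h_le {f : ι →₀ ℕ} (hf : f ≤ c + d) : f ∈ supported ℕ ℕ J :=
    (mem_supported ℕ f).2 <| (Finset.coe_subset.2 (support_mono hf)).trans he
  exact ⟨⟨c, h_le le_self_add, rfl⟩, ⟨d, h_le le_add_self, rfl⟩⟩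

theorem IsFace.eq_closure_image {τ : AddSubmonoid (L n)} {I : Set ι}
    (hτ : IsFace τ (AddSubmonoid.closure (b '' I))) :
    τ = AddSubmonoid.closure (b '' {i | i ∈ I ∧ b i ∈ τ}) := by
  refine le_antisymm (fun v hv => ?_) (AddSubmonoid.closure_le.2 ?_)
  · obtain ⟨c, hc, rfl⟩ := mem_closure_image_iff_linearCombination.1 (hτ.1 hv)
    rw [mem_supported] at hc
    have hgen : ∀ i ∈ c.support, b i ∈ AddSubmonoid.closure (b '' I) := fun i hi =>
      AddSubmonoid.subset_closure ⟨i, hc hi, rfl⟩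
    rw [linearCombination_apply] at hv ⊢
    have hterms := hτ.mem_of_sum_mem (fun i hi => nsmul_mem (hgen i hi) _) hv
    refine sum_mem fun i hi => nsmul_mem (AddSubmonoid.subset_closure ?_) _
    exact mem_image_of_mem b
      ⟨hc hi, hτ.mem_of_nsmul_mem (mem_support_iff.1 hi) (hgen i hi) (hterms i hi)⟩
  · rintro _ ⟨i, ⟨-, hi⟩, rfl⟩
    exact hi

theorem isSmooth_closure_range [Finite ι] (hb : LinearIndependent ℤ b) :
    IsSmooth (AddSubmonoid.closure (range b)) := by
  let e := Finite.equivFin ι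
  exact ⟨Nat.card ι, b ∘ e.symm, hb.comp _ e.symm.injective, by
    rw [e.symm.surjective.range_comp]⟩

theorem isSmooth_closure_image (hb : LinearIndependent ℤ b) {I : Set ι} (hI : I.Finite) :
    IsSmooth (AddSubmonoid.closure (b '' I)) := by
  have := hI.to_subtype
  rw [image_eq_range]
  exact isSmooth_closure_range (hb.comp _ Subtype.val_injective)

theorem smoothing_isRefinement_general {n k : ℕ} (σ : AddSubmonoid (L n))
    (b : Fin k → L n)
    (hmem : ∀ i, b i ∈ σ)
    (hind : LinearIndependent ℤ b)
    (hsupp : supp σ = Submodule.span ℝ≥0 (toReal '' Set.range b)) :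
    IsRefinement {τ | ∃ I : Set (Fin k), τ = AddSubmonoid.closure (b '' I)} σ ∧
    ∀ τ ∈ {τ | ∃ I : Set (Fin k), τ = AddSubmonoid.closure (b '' I)}, IsSmooth τ := by
  have hle (I : Set (Fin k)) : AddSubmonoid.closure (b '' I) ≤ σ :=
    AddSubmonoid.closure_le.2 (image_subset_iff.2 fun i _ => hmem i)
  have hindℕ : LinearIndependent ℕ b := hind.restrict_scalars' ℕ
  refine ⟨⟨?_, ?_, ?_, ?_⟩, ?_⟩
  · rintro _ ⟨I, rfl⟩
    exact hle I
  · rintro _ ⟨I, rfl⟩ τ hτ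
    exact ⟨_, hτ.eq_closure_image⟩
  · rintro _ ⟨I, rfl⟩ _ ⟨J, rfl⟩
    rw [← closure_image_inter hindℕ]
    exact ⟨isFace_closure_image_of_subset hindℕ inter_subset_left,
      isFace_closure_image_of_subset hindℕ inter_subset_right⟩
  · refine (iUnion₂_subset ?_).antisymm fun x hx => mem_biUnion ⟨univ, rfl⟩ ?_
    · rintro _ ⟨I, rfl⟩
      exact supp_mono (hle I)
    · rw [hsupp, ← image_univ] at hx
      exact Submodule.span_mono (image_mono AddSubmonoid.subset_closure) hx
  · rintro _ ⟨I, rfl⟩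
    exact isSmooth_closure_image hind I.toFinite

/-- A simplicial toric monoid `σ` with extremals
`v₁,…,v_n` (linearly independent elements of `σ` whose non-negative span is
the support of `σ`) admits a canonical smooth refinement, its *smoothing*:
the collection of all submonoids `ℤ≥0⟨v_i : i ∈ I⟩`, `I ⊆ {1,…,n}`, is a
refinement of `σ` all of whose members are smooth. -/
theorem smoothing_isRefinement {n k : ℕ} (σ : AddSubmonoid (L n))
    (hσ : IsToric σ) (b : Fin k → L n)
    (hmem : ∀ i, b i ∈ σ)
    (hind : LinearIndependent ℤ b)
    (hsupp : supp σ = Submodule.span ℝ≥0 (toReal '' Set.range b)) :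
    IsRefinement {τ | ∃ I : Set (Fin k), τ = AddSubmonoid.closure (b '' I)} σ ∧
    ∀ τ ∈ {τ | ∃ I : Set (Fin k), τ = AddSubmonoid.closure (b '' I)}, IsSmooth τ :=
  smoothing_isRefinement_general σ b hmem hind hsupp

end Toric
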